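/- For fixed real k > -1/2, as N → ∞ the product M_N(2k) = ∏_{j=1}^{N} Γ(j)Γ(j+2k)/Γ(j+k)² satisfies M_N(2k) ~ (G(k+1)²/G(2k+1)) N^{k²}, i.e. M_N(2k) N^{-k²} → G(k+1)²/G(2k+1), where G is the Barnes G-function. -/

import Mathlib

/-!
With `a_n = (n+k)²/(n(n+2k))`, Euler's limit formula for `Γ` gives
`Γ(j)Γ(j+2k)/Γ(j+k)² = ∏_{n ≥ j} a_n`, so that, summing by parts,
`log M_N(2k) = ∑_{n ≤ N} n log a_n + N ∑_{n > N} log a_n`.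
With the Weierstrass factors `b_n(x) = (1+x/n)^n e^{x²/(2n) - x}` of `G` one has
`n log a_n = k²/n + 2 log b_n(k) - log b_n(2k)`, hence
`log M_N(2k) - k² log N`
`  = ∑_{n ≤ N} (2 log b_n(k) - log b_n(2k)) + k² (H_N - log N) + N ∑_{n > N} log a_n`.
The three terms tend to `log (G(k+1)²/G(2k+1)) - k²(1+γ)`, `k²γ` and `k²`, the last one
because `log a_n = k²/n² + O(n⁻³)`.
-/

open Finset Nat Filter Topology

/-- The Barnes G-function for real arguments, via its Weierstrass product:
`G(1+z) = (2π)^{z/2} exp(−(z+z²(1+γ))/2) ∏_{n=1}^∞ (1+z/n)^n exp(z²/(2n) − z)`,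
where `γ` is the Euler–Mascheroni constant. -/
noncomputable def BarnesG (x : ℝ) : ℝ :=
  (2 * Real.pi) ^ ((x - 1) / 2) *
    Real.exp (-((x - 1) + (x - 1) ^ 2 * (1 + Real.eulerMascheroniConstant)) / 2) *
    ∏' n : ℕ,
      (1 + (x - 1) / (n + 1)) ^ (n + 1) * Real.exp ((x - 1) ^ 2 / (2 * (n + 1)) - (x - 1))

open Real

namespace KeatingSnaith

lemma abs_log_one_add_sub_le {u : ℝ} (hu : |u| ≤ 1 / 2) :
    |log (1 + u) - (u - u ^ 2 / 2)| ≤ 2 * |u| ^ 3 := by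
  have hlt : |-u| < 1 := by rw [abs_neg]; linarith
  have h := abs_log_sub_add_sum_range_le hlt 2
  simp only [sum_range_succ, sum_range_zero, abs_neg, sub_neg_eq_add] at h
  have hden : |u| ^ (2 + 1) / (1 - |u|) ≤ 2 * |u| ^ 3 := by
    rw [div_le_iff₀ (by linarith), pow_succ]
    nlinarith [mul_le_mul_of_nonneg_left hu (by positivity : (0 : ℝ) ≤ |u| ^ 2 * |u|)]
  calc |log (1 + u) - (u - u ^ 2 / 2)|
      = |0 + (-u) ^ (0 + 1) / ((0 : ℕ) + 1) + (-u) ^ (1 + 1) / ((1 : ℕ) + 1)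
          + log (1 + u)| := by
        congr 1; push_cast; ring
    _ ≤ 2 * |u| ^ 3 := h.trans hden

lemma hasSum_sub_succ_of_antitone {g : ℕ → ℝ} (hg : Antitone g)
    (hlim : Tendsto g atTop (𝓝 0)) : HasSum (fun n ↦ g n - g (n + 1)) (g 0) := by
  rw [hasSum_iff_tendsto_nat_of_nonneg fun n ↦ sub_nonneg.2 (hg n.le_succ)]
  simp_rw [sum_range_sub']
  simpa using tendsto_const_nhds.sub hlim

lemma hasSum_one_div_add_one_mul_add_two (N : ℕ) :
    HasSum (fun i : ℕ ↦ 1 / ((((N + i : ℕ) : ℝ) + 1) * (((N + i : ℕ) : ℝ) + 2)))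
      (1 / ((N : ℝ) + 1)) := by
  have hg : Antitone fun i : ℕ ↦ 1 / (((N + i : ℕ) : ℝ) + 1) := fun i j hij ↦ by
    dsimp only
    gcongr
  have hlim : Tendsto (fun i : ℕ ↦ 1 / (((N + i : ℕ) : ℝ) + 1)) atTop (𝓝 0) :=
    (tendsto_one_div_add_atTop_nhds_zero_nat).comp (tendsto_add_atTop_nat N) |>.congr
      fun i ↦ by simp [add_comm]
  convert hasSum_sub_succ_of_antitone hg hlim using 1
  · ext i
    push_cast
    field_simp
    ring
  · simp

lemma sum_range_tsum_nat_add {f : ℕ → ℝ} (hf : Summable f) (N : ℕ) :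
    ∑ j ∈ range N, ∑' i, f (j + i)
      = ∑ n ∈ range N, (n + 1) * f n + N * ∑' i, f (N + i) := by
  induction N with
  | zero => simp
  | succ N ih =>
    have hsplit : ∑' i, f (N + i) = f N + ∑' i, f (N + 1 + i) := by
      rw [((summable_nat_add_iff N).2 hf |>.congr fun i ↦ by rw [add_comm]).tsum_eq_zero_add]
      simp only [add_zero, add_assoc, add_comm 1]
    rw [sum_range_succ, ih, sum_range_succ, hsplit]
    push_cast
    ring

lemma abs_tsum_nat_add_sub_le {f : ℕ → ℝ} {L ε : ℝ} {N : ℕ}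
    (hf : ∀ n ≥ N, |f n - L / ((n + 1) * (n + 2))| ≤ ε / ((n + 1) * (n + 2))) :
    |∑' i, f (N + i) - L / (N + 1)| ≤ ε / (N + 1) := by
  set w : ℕ → ℝ := fun i ↦ 1 / ((((N + i : ℕ) : ℝ) + 1) * (((N + i : ℕ) : ℝ) + 2))
  have hw : HasSum w (1 / ((N : ℝ) + 1)) := hasSum_one_div_add_one_mul_add_two N
  have hbound : ∀ i, ‖f (N + i) - L * w i‖ ≤ ε * w i := fun i ↦ by
    simpa only [w, mul_one_div, Real.norm_eq_abs] using hf (N + i) (Nat.le_add_right N i)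
  have herr : Summable fun i ↦ f (N + i) - L * w i :=
    Summable.of_norm_bounded (hw.summable.mul_left ε) hbound
  have hsum : ∑' i, f (N + i) = ∑' i, (f (N + i) - L * w i) + L / (N + 1) := by
    rw [← mul_one_div, ← hw.tsum_eq, ← tsum_mul_left,
      ← herr.tsum_add (hw.summable.mul_left L)]
    simp
  rw [hsum, add_sub_cancel_right, ← mul_one_div]
  exact tsum_of_norm_bounded (hw.mul_left ε) hbound

-- Unlike `1 / (n + 1) ^ 2`, the weights `1 / ((n + 1) * (n + 2))` telescope, so their tails
-- are explicit.
lemma abs_sub_div_mul_add_two_le {x L C : ℝ} {N n : ℕ} (hn : N ≤ n)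
    (h : |x - L / ((n : ℝ) + 1) ^ 2| ≤ C / ((n : ℝ) + 1) ^ 3) :
    |x - L / ((n + 1) * (n + 2))| ≤ (|L| + 2 * C) / (N + 1) / ((n + 1) * (n + 2)) := by
  have hNn : (N : ℝ) + 1 ≤ n + 1 := by gcongr
  have hN : (0 : ℝ) < N + 1 := by positivity
  have hC : 0 ≤ C := by
    simpa using (le_div_iff₀ (by positivity)).1 ((abs_nonneg _).trans h)
  have hsplit : x - L / ((n + 1) * (n + 2))
      = (x - L / ((n : ℝ) + 1) ^ 2) + L / (((n : ℝ) + 1) ^ 2 * (n + 2)) := by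
    field_simp
    ring
  have hmain : C / ((n : ℝ) + 1) ^ 3 ≤ 2 * C / (N + 1) / ((n + 1) * (n + 2)) := by
    rw [div_div, div_le_div_iff₀ (by positivity) (by positivity)]
    have : ((N : ℝ) + 1) * ((n + 1) * (n + 2)) ≤ 2 * (n + 1) ^ 3 := by nlinarith
    nlinarith
  have hcorr : |L| / (((n : ℝ) + 1) ^ 2 * (n + 2)) ≤ |L| / (N + 1) / ((n + 1) * (n + 2)) := by
    rw [div_div]
    exact div_le_div_of_nonneg_left (abs_nonneg L) (by positivity) (by nlinarith)
  calc |x - L / ((n + 1) * (n + 2))|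
      ≤ |x - L / ((n : ℝ) + 1) ^ 2| + |L / (((n : ℝ) + 1) ^ 2 * (n + 2))| := by
        rw [hsplit]; exact abs_add_le _ _
    _ ≤ C / ((n : ℝ) + 1) ^ 3 + |L| / (((n : ℝ) + 1) ^ 2 * (n + 2)) := by
        rw [abs_div, abs_of_pos (by positivity : (0 : ℝ) < ((n : ℝ) + 1) ^ 2 * (n + 2))]
        gcongr
    _ ≤ (|L| + 2 * C) / (N + 1) / ((n + 1) * (n + 2)) := by
        rw [add_div, add_div, add_comm]
        gcongr

theorem tendsto_natCast_mul_tsum_nat_add {f : ℕ → ℝ} {L C : ℝ}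
    (hf : ∀ᶠ n : ℕ in atTop, |f n - L / ((n : ℝ) + 1) ^ 2| ≤ C / ((n : ℝ) + 1) ^ 3) :
    Tendsto (fun N : ℕ ↦ N * ∑' i, f (N + i)) atTop (𝓝 L) := by
  obtain ⟨n₀, hn₀⟩ := eventually_atTop.1 hf
  have hC : 0 ≤ C := by
    simpa using (le_div_iff₀ (by positivity)).1 ((abs_nonneg _).trans (hn₀ n₀ le_rfl))
  have hbound : ∀ N ≥ n₀,
      |N * ∑' i, f (N + i) - L| ≤ (2 * |L| + 2 * C) * (1 / (N + 1)) := by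
    intro N hN
    have hN1 : (0 : ℝ) < N + 1 := by positivity
    have htail := abs_tsum_nat_add_sub_le fun n hn ↦
      abs_sub_div_mul_add_two_le hn (hn₀ n (hN.trans hn))
    have hNle : (N : ℝ) / (N + 1) ≤ 1 := by rw [div_le_one hN1]; linarith
    calc |N * ∑' i, f (N + i) - L|
        = |N * (∑' i, f (N + i) - L / (N + 1)) - L / (N + 1)| := by
          congr 1; field_simp; ring
      _ ≤ N * ((|L| + 2 * C) / (N + 1) / (N + 1)) + |L| / (N + 1) := by
          refine (abs_sub _ _).trans ?_
          rw [abs_mul, abs_div, Nat.abs_cast, abs_of_pos hN1]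
          gcongr
      _ = N / (N + 1) * ((|L| + 2 * C) / (N + 1)) + |L| / (N + 1) := by ring
      _ ≤ 1 * ((|L| + 2 * C) / (N + 1)) + |L| / (N + 1) := by gcongr
      _ = (2 * |L| + 2 * C) * (1 / (N + 1)) := by ring
  have hlim := (tendsto_one_div_add_atTop_nhds_zero_nat (𝕜 := ℝ)).const_mul (2 * |L| + 2 * C)
  rw [mul_zero] at hlim
  exact tendsto_sub_nhds_zero_iff.1 <|
    squeeze_zero_norm' (eventually_atTop.2 ⟨n₀, hbound⟩) hlim

noncomputable def barnesFactor (x : ℝ) (n : ℕ) : ℝ :=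
  (1 + x / (n + 1)) ^ (n + 1) * exp (x ^ 2 / (2 * (n + 1)) - x)

lemma one_add_div_pos {x : ℝ} {n : ℕ} (hx : -(n + 1 : ℝ) < x) : 0 < 1 + x / (n + 1) := by
  have hn : (0 : ℝ) < n + 1 := by positivity
  have := div_pos (by linarith : (0 : ℝ) < n + 1 + x) hn
  rwa [add_div, div_self hn.ne'] at this

lemma barnesFactor_pos {x : ℝ} {n : ℕ} (hx : -(n + 1 : ℝ) < x) : 0 < barnesFactor x n :=
  mul_pos (pow_pos (one_add_div_pos hx) _) (exp_pos _)

lemma log_barnesFactor {x : ℝ} {n : ℕ} (hx : -(n + 1 : ℝ) < x) :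
    log (barnesFactor x n)
      = (n + 1) * (log (1 + x / (n + 1)) - (x / (n + 1) - (x / (n + 1)) ^ 2 / 2)) := by
  rw [barnesFactor, log_mul (pow_pos (one_add_div_pos hx) _).ne' (exp_pos _).ne', Real.log_pow,
    log_exp]
  push_cast
  field_simp
  ring

lemma abs_log_barnesFactor_le {x : ℝ} {n : ℕ} (hx : 2 * |x| ≤ n + 1) :
    |log (barnesFactor x n)| ≤ 2 * |x| ^ 3 / ((n : ℝ) + 1) ^ 2 := by
  have hn : (0 : ℝ) < n + 1 := by positivity
  have hu : |x / (n + 1)| ≤ 1 / 2 := by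
    rw [abs_div, abs_of_pos hn, div_le_iff₀ hn]
    linarith
  rw [log_barnesFactor (by linarith [neg_abs_le x]), abs_mul, abs_of_pos hn]
  calc (n + 1) * |log (1 + x / (n + 1)) - (x / (n + 1) - (x / (n + 1)) ^ 2 / 2)|
      ≤ (n + 1) * (2 * |x / (n + 1)| ^ 3) := by gcongr; exact abs_log_one_add_sub_le hu
    _ = 2 * |x| ^ 3 / ((n : ℝ) + 1) ^ 2 := by
      rw [abs_div, abs_of_pos hn]
      field_simp

lemma summable_log_barnesFactor (x : ℝ) : Summable fun n ↦ log (barnesFactor x n) := by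
  have hsq : Summable fun n : ℕ ↦ 2 * |x| ^ 3 / ((n : ℝ) + 1) ^ 2 := by
    have := (summable_nat_add_iff 1).2 (summable_one_div_nat_pow.2 one_lt_two)
    simpa [div_eq_mul_inv] using this.mul_left (2 * |x| ^ 3)
  refine Summable.of_norm_bounded_eventually_nat hsq ?_
  filter_upwards [(tendsto_natCast_atTop_atTop (R := ℝ)).eventually_ge_atTop (2 * |x|)] with n hn
  exact abs_log_barnesFactor_le (by linarith)

lemma BarnesG_add_one_eq_exp {x : ℝ} (hx : -1 < x) :
    BarnesG (x + 1) = exp (x / 2 * log (2 * π) - (x + x ^ 2 * (1 + eulerMascheroniConstant)) / 2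
      + ∑' n, log (barnesFactor x n)) := by
  have hpos : ∀ n : ℕ, 0 < barnesFactor x n := fun n ↦
    barnesFactor_pos (by linarith [(Nat.cast_nonneg n : (0 : ℝ) ≤ n)])
  rw [exp_add, rexp_tsum_eq_tprod hpos (summable_log_barnesFactor x), sub_eq_add_neg, exp_add,
    mul_comm (x / 2), ← rpow_def_of_pos (by positivity), BarnesG, add_sub_cancel_right,
    neg_div]
  rfl

lemma GammaSeq_mul_div_GammaSeq_mul {a b c d : ℝ} (habcd : a + b = c + d) {n : ℕ} (hn : 0 < n) :
    GammaSeq a n * GammaSeq b n / (GammaSeq c n * GammaSeq d n)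
      = ∏ j ∈ range (n + 1), (c + j) * (d + j) / ((a + j) * (b + j)) := by
  have hpow : (n : ℝ) ^ a * (n : ℝ) ^ b = (n : ℝ) ^ c * (n : ℝ) ^ d := by
    rw [← rpow_add (by positivity), ← rpow_add (by positivity), habcd]
  have hne : (n : ℝ) ^ c * (n : ℝ) ^ d * (n ! * n !) ≠ 0 := by positivity
  simp only [GammaSeq, prod_div_distrib, prod_mul_distrib]
  rw [_root_.div_mul_div_comm, _root_.div_mul_div_comm, mul_mul_mul_comm,
    mul_mul_mul_comm ((n : ℝ) ^ c), hpow]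
  exact div_div_div_cancel_left' _ _ hne

theorem tendsto_prod_range_Gamma_mul_Gamma_div {a b c d : ℝ} (habcd : a + b = c + d)
    (hc : ∀ m : ℕ, c ≠ -m) (hd : ∀ m : ℕ, d ≠ -m) :
    Tendsto (fun n ↦ ∏ j ∈ range n, (c + j) * (d + j) / ((a + j) * (b + j))) atTop
      (𝓝 (Gamma a * Gamma b / (Gamma c * Gamma d))) := by
  have hlim := ((GammaSeq_tendsto_Gamma a).mul (GammaSeq_tendsto_Gamma b)).div
    ((GammaSeq_tendsto_Gamma c).mul (GammaSeq_tendsto_Gamma d))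
    (mul_ne_zero (Gamma_ne_zero hc) (Gamma_ne_zero hd))
  refine (tendsto_add_atTop_iff_nat 1).1 (hlim.congr' ?_)
  filter_upwards [eventually_gt_atTop 0] with n hn
  exact GammaSeq_mul_div_GammaSeq_mul habcd hn

noncomputable def momentFactor (k : ℝ) (n : ℕ) : ℝ :=
  ((n : ℝ) + 1 + k) ^ 2 / (((n : ℝ) + 1) * ((n : ℝ) + 1 + 2 * k))

lemma one_le_momentFactor {k : ℝ} (hk : -1 / 2 < k) (n : ℕ) : 1 ≤ momentFactor k n := by
  rw [momentFactor, one_le_div (by nlinarith [(Nat.cast_nonneg n : (0 : ℝ) ≤ n)])]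
  nlinarith [sq_nonneg k]

lemma Gamma_ratio_pos {k : ℝ} (hk : -1 / 2 < k) (j : ℕ) :
    0 < Gamma (j + 1) * Gamma (j + 1 + 2 * k) / Gamma (j + 1 + k) ^ 2 := by
  have hj : (0 : ℝ) ≤ j := Nat.cast_nonneg j
  have := Gamma_pos_of_pos (by linarith : (0 : ℝ) < j + 1 + 2 * k)
  have := Gamma_pos_of_pos (by linarith : (0 : ℝ) < j + 1 + k)
  have := Gamma_pos_of_pos (by linarith : (0 : ℝ) < j + 1)
  positivity

lemma hasSum_log_momentFactor {k : ℝ} (hk : -1 / 2 < k) (j : ℕ) :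
    HasSum (fun i ↦ log (momentFactor k (j + i)))
      (log (Gamma (j + 1) * Gamma (j + 1 + 2 * k) / Gamma (j + 1 + k) ^ 2)) := by
  have hc : ∀ m : ℕ, (j + 1 + k : ℝ) ≠ -m := fun m ↦ by
    linarith [(Nat.cast_nonneg m : (0 : ℝ) ≤ m)]
  have hprod := tendsto_prod_range_Gamma_mul_Gamma_div (a := j + 1) (b := j + 1 + 2 * k)
    (by ring) hc hc
  rw [← sq] at hprod
  rw [hasSum_iff_tendsto_nat_of_nonneg fun i ↦ log_nonneg (one_le_momentFactor hk _)]
  have hterm : ∀ i : ℕ, (j + 1 + k + i) * (j + 1 + k + i) / ((j + 1 + i) * (j + 1 + 2 * k + i))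
      = momentFactor k (j + i) := fun i ↦ by
    rw [momentFactor]
    push_cast
    ring_nf
  refine (hprod.log (Gamma_ratio_pos hk j).ne').congr fun n ↦ ?_
  rw [prod_congr rfl fun i _ ↦ hterm i,
    log_prod fun i _ ↦ (zero_lt_one.trans_le (one_le_momentFactor hk _)).ne']

lemma add_one_mul_log_momentFactor {k : ℝ} (hk : -1 / 2 < k) (n : ℕ) :
    (n + 1) * log (momentFactor k n)
      = k ^ 2 / (n + 1) + (2 * log (barnesFactor k n) - log (barnesFactor (2 * k) n)) := by
  have h1 := one_add_div_pos (x := k) (n := n) (by linarith)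
  have h2 := one_add_div_pos (x := 2 * k) (n := n) (by linarith)
  have hfactor : momentFactor k n = (1 + k / (n + 1)) ^ 2 / (1 + 2 * k / (n + 1)) := by
    rw [momentFactor]
    field_simp
  rw [hfactor, log_div (by positivity) h2.ne', Real.log_pow,
    log_barnesFactor (by linarith), log_barnesFactor (by linarith)]
  field_simp
  ring

lemma abs_log_momentFactor_sub_le {k : ℝ} (hk : -1 / 2 < k) {n : ℕ} (hn : 4 * |k| ≤ n + 1) :
    |log (momentFactor k n) - k ^ 2 / ((n : ℝ) + 1) ^ 2|
      ≤ 20 * |k| ^ 3 / ((n : ℝ) + 1) ^ 3 := by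
  have hn1 : (0 : ℝ) < n + 1 := by positivity
  have hk1 := abs_log_barnesFactor_le (x := k) (n := n) (by linarith [abs_nonneg k])
  have hk2 := abs_log_barnesFactor_le (x := 2 * k) (n := n) (by rw [abs_mul, abs_two]; linarith)
  have hdiff : log (momentFactor k n) - k ^ 2 / ((n : ℝ) + 1) ^ 2
      = (2 * log (barnesFactor k n) - log (barnesFactor (2 * k) n)) / (n + 1) := by
    rw [eq_div_iff hn1.ne', sub_mul, mul_comm, add_one_mul_log_momentFactor hk]
    field_simp
    ring
  rw [hdiff, abs_div, abs_of_pos hn1, div_le_iff₀ hn1]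
  calc |2 * log (barnesFactor k n) - log (barnesFactor (2 * k) n)|
      ≤ 2 * |log (barnesFactor k n)| + |log (barnesFactor (2 * k) n)| := by
        refine (abs_sub _ _).trans ?_
        rw [abs_mul, abs_two]
    _ ≤ 2 * (2 * |k| ^ 3 / ((n : ℝ) + 1) ^ 2) + 2 * |2 * k| ^ 3 / ((n : ℝ) + 1) ^ 2 := by
        gcongr
    _ = 20 * |k| ^ 3 / ((n : ℝ) + 1) ^ 3 * (n + 1) := by
        rw [abs_mul, abs_two]
        field_simp
        ring

lemma prod_Gamma_ratio_mul_rpow_eq_exp {k : ℝ} (hk : -1 / 2 < k) {N : ℕ} (hN : 0 < N) :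
    (∏ j ∈ range N,
        Gamma (j + 1) * Gamma ((j : ℝ) + 1 + 2 * k) / Gamma ((j : ℝ) + 1 + k) ^ 2)
        * (N : ℝ) ^ (-(k ^ 2))
      = exp (∑ n ∈ range N, (2 * log (barnesFactor k n) - log (barnesFactor (2 * k) n))
          + k ^ 2 * (harmonic N - log (N : ℝ)) + N * ∑' i, log (momentFactor k (N + i))) := by
  have hsummable : Summable fun n ↦ log (momentFactor k n) := by
    simpa using (hasSum_log_momentFactor hk 0).summable
  have hprod : ∏ j ∈ range N,
      Gamma (j + 1) * Gamma ((j : ℝ) + 1 + 2 * k) / Gamma ((j : ℝ) + 1 + k) ^ 2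
        = exp (∑ j ∈ range N, ∑' i, log (momentFactor k (j + i))) := by
    rw [exp_sum]
    refine prod_congr rfl fun j _ ↦ ?_
    rw [(hasSum_log_momentFactor hk j).tsum_eq, exp_log (Gamma_ratio_pos hk j)]
  have hharmonic : ∑ n ∈ range N, ((n : ℝ) + 1) * log (momentFactor k n)
      = ∑ n ∈ range N, (2 * log (barnesFactor k n) - log (barnesFactor (2 * k) n))
        + k ^ 2 * harmonic N := by
    simp only [add_one_mul_log_momentFactor hk, sum_add_distrib, harmonic, div_eq_mul_inv]
    push_cast [mul_sum]
    ring
  rw [hprod, sum_range_tsum_nat_add hsummable, rpow_def_of_pos (by positivity), ← exp_add,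
    hharmonic]
  ring_nf

end KeatingSnaith

open KeatingSnaith

/-- For fixed real `k > -1/2`, `M_N(2k) = ∏_{j=1}^N Γ(j)Γ(j+2k)/Γ(j+k)²` satisfies
`M_N(2k) N^{-k²} → G(k+1)²/G(2k+1)` as `N → ∞`. -/
theorem keating_snaith_asymptotics (k : ℝ) (hk : -1/2 < k) :
    Tendsto
      (fun N : ℕ =>
        (∏ j ∈ Finset.range N,
          Real.Gamma (j + 1) * Real.Gamma ((j : ℝ) + 1 + 2 * k) /
            Real.Gamma ((j : ℝ) + 1 + k) ^ 2) * (N : ℝ) ^ (-(k ^ 2)))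
      atTop (𝓝 (BarnesG (k + 1) ^ 2 / BarnesG (2 * k + 1))) := by
  have hbarnes := ((summable_log_barnesFactor k).hasSum.mul_left 2).sub
    (summable_log_barnesFactor (2 * k)).hasSum
  have htail := tendsto_natCast_mul_tsum_nat_add (f := fun n ↦ log (momentFactor k n)) <| by
    filter_upwards [(tendsto_natCast_atTop_atTop (R := ℝ)).eventually_ge_atTop (4 * |k|)]
      with n hn
    exact abs_log_momentFactor_sub_le hk (by linarith)
  have hlim := ((hbarnes.tendsto_sum_nat.add (tendsto_harmonic_sub_log.const_mul (k ^ 2))).add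
    htail).rexp
  have hG : BarnesG (k + 1) ^ 2 / BarnesG (2 * k + 1)
      = exp (2 * ∑' n, log (barnesFactor k n) - ∑' n, log (barnesFactor (2 * k) n)
          + k ^ 2 * eulerMascheroniConstant + k ^ 2) := by
    rw [BarnesG_add_one_eq_exp (by linarith), BarnesG_add_one_eq_exp (by linarith), sq,
      ← exp_add, ← exp_sub]
    ring_nf
  rw [hG]
  exact hlim.congr' <| (eventually_gt_atTop 0).mono fun N hN ↦
    (prod_Gamma_ratio_mul_rpow_eq_exp hk hN).symm
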